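/- Let a_1, …, a_n be positive integers with a_1 + ⋯ + a_n = 2A. Consider weighted 1-approval (plurality) spatial voting on ℝ with three candidates at positions 1, 2, 4, where c* is the candidate at 4, and n + 1 voters: for each i ∈ {1, …, n}, voter i has interval [1, 2] and weight a_i, and voter n+1 has interval [4, 5] and weight A. Then c* is a possible winner if and only if there is a subset S ⊆ {1, …, n} with Σ_{i∈S} a_i = A. -/

import Mathlib

/-- Candidate `i` is ranked above candidate `j` by a voter at position `T`:
either strictly closer, or tied in distance with the smaller index winning. -/
def prefers {m : ℕ} (c : Fin m → ℝ) (T : ℝ) (i j : Fin m) : Prop :=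
  |T - c i| < |T - c j| ∨ (|T - c i| = |T - c j| ∧ i < j)

noncomputable instance {m : ℕ} (c : Fin m → ℝ) (T : ℝ) (i j : Fin m) :
    Decidable (prefers c T i j) :=
  inferInstanceAs (Decidable (_ ∨ _))

/-- The set of indices of the `k` highest-ranked candidates for a voter at position `T`:
those with fewer than `k` candidates ranked above them. -/
noncomputable def topk {m : ℕ} (c : Fin m → ℝ) (T : ℝ) (k : ℕ) : Finset (Fin m) :=
  Finset.univ.filter fun i => (Finset.univ.filter fun j => prefers c T j i).card < k

/-- The weighted `k`-approval score of candidate `i`: the sum of the weights of the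
voters whose top-`k` set contains `i`. -/
noncomputable def score {m n : ℕ} (c : Fin m → ℝ) (k : ℕ) (w T : Fin n → ℝ)
    (i : Fin m) : ℝ :=
  ∑ j, if i ∈ topk c (T j) k then w j else 0

/-!
A voter confined to `[1, 2]` votes for the candidate at `1` when standing at or left of the
midpoint `3 / 2` and for the candidate at `2` otherwise, while the voter confined to `[4, 5]`
always votes for `c*`. So `c*` scores exactly `A`, and the `2A` remaining weight is split between
the other two candidates according to the set `S` of voters standing at or left of `3 / 2`;
`c*` wins iff neither share exceeds `A`, i.e. iff `S` has weight exactly `A`.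
-/

section Ranking

variable {m : ℕ} {c : Fin m → ℝ} {T : ℝ} {i j : Fin m}

lemma prefers_irrefl (i : Fin m) : ¬ prefers c T i i := by
  rintro (h | ⟨-, h⟩) <;> exact lt_irrefl _ h

lemma prefers.asymm (h : prefers c T i j) : ¬ prefers c T j i := by
  rintro (h' | ⟨h', h''⟩) <;> rcases h with h | ⟨h, h₁⟩
  all_goals first | linarith | exact lt_asymm h₁ h''

lemma prefers_of_le_midpoint (hc : c i < c j) (hij : i < j) (hT : T ≤ (c i + c j) / 2) :
    prefers c T i j := by
  rcases hT.lt_or_eq with hT | hT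
  · exact Or.inl (sq_lt_sq.mp (by nlinarith))
  · exact Or.inr ⟨(sq_eq_sq_iff_abs_eq_abs _ _).mp (by rw [hT]; ring), hij⟩

lemma prefers_of_midpoint_lt (hc : c j < c i) (hT : (c i + c j) / 2 < T) :
    prefers c T i j :=
  Or.inl (sq_lt_sq.mp (by nlinarith))

lemma mem_topk_one_iff : i ∈ topk c T 1 ↔ ∀ j, ¬ prefers c T j i := by
  simp [topk, Finset.card_eq_zero, Finset.filter_eq_empty_iff]

lemma topk_one_eq_singleton (h : ∀ j, j ≠ i → prefers c T i j) : topk c T 1 = {i} := by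
  ext j
  rw [mem_topk_one_iff, Finset.mem_singleton]
  refine ⟨fun hj => by_contra fun hji => hj i (h j hji), ?_⟩
  rintro rfl k hk
  by_cases hkj : k = j
  · subst hkj
    exact prefers_irrefl k hk
  · exact (h k hkj).asymm hk

lemma score_one_eq_of_topk {n : ℕ} {w T : Fin n → ℝ} (f : Fin n → Fin m)
    (hf : ∀ j, topk c (T j) 1 = {f j}) (i : Fin m) :
    score c 1 w T i = ∑ j, if f j = i then w j else 0 := by
  simp only [score, hf, Finset.mem_singleton, eq_comm]

end Ranking

section Reduction

-- Ties at the midpoints `3 / 2` and `3` go to the candidate with the smaller index.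
noncomputable def pluralityVote (T : ℝ) : Fin 3 :=
  if T ≤ 3 / 2 then 0 else if T ≤ 3 then 1 else 2

lemma topk_one_eq_pluralityVote (T : ℝ) :
    topk ![(1 : ℝ), 2, 4] T 1 = {pluralityVote T} := by
  apply topk_one_eq_singleton
  unfold pluralityVote
  split_ifs with h₁ h₂ <;> intro j hj <;> fin_cases j <;> simp only at hj ⊢ <;>
    first
    | exact absurd rfl hj
    | refine prefers_of_le_midpoint ?_ (by decide) ?_ <;> simp <;> linarith
    | refine prefers_of_midpoint_lt ?_ ?_ <;> simp <;> linarith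

lemma pluralityVote_of_le_three {T : ℝ} (hT : T ≤ 3) :
    pluralityVote T = if T ≤ 3 / 2 then 0 else 1 := by
  simp [pluralityVote, hT]

variable {n : ℕ} {w T : Fin (n + 1) → ℝ}

lemma score_eq_sum_castSucc_add (hlast : 3 < T (Fin.last n)) (i : Fin 3) :
    score ![(1 : ℝ), 2, 4] 1 w T i =
      (∑ j : Fin n, if pluralityVote (T j.castSucc) = i then w j.castSucc else 0)
        + if i = 2 then w (Fin.last n) else 0 := by
  have hvote : pluralityVote (T (Fin.last n)) = 2 := by
    simp [pluralityVote, hlast.not_ge, (show ¬ T (Fin.last n) ≤ 3 / 2 by linarith)]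
  rw [score_one_eq_of_topk _ fun j => topk_one_eq_pluralityVote (T j), Fin.sum_univ_castSucc,
    hvote]
  simp only [eq_comm (a := (2 : Fin 3))]

lemma forall_score_le_iff (hleft : ∀ j : Fin n, T j.castSucc ≤ 3) (hlast : 3 < T (Fin.last n))
    (hsum : ∑ j : Fin n, w j.castSucc = 2 * w (Fin.last n)) :
    (∀ i, score ![(1 : ℝ), 2, 4] 1 w T i ≤ score ![(1 : ℝ), 2, 4] 1 w T 2) ↔
      ∑ j ∈ Finset.univ.filter (fun j : Fin n => T j.castSucc ≤ 3 / 2), w j.castSucc =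
        w (Fin.last n) := by
  have h₀ : score ![(1 : ℝ), 2, 4] 1 w T 0 =
      ∑ j ∈ Finset.univ.filter (fun j : Fin n => T j.castSucc ≤ 3 / 2), w j.castSucc := by
    rw [score_eq_sum_castSucc_add hlast, Finset.sum_filter]
    simp [pluralityVote_of_le_three (hleft _)]
  have h₁ : score ![(1 : ℝ), 2, 4] 1 w T 1 =
      ∑ j ∈ Finset.univ.filter (fun j : Fin n => ¬ T j.castSucc ≤ 3 / 2), w j.castSucc := by
    rw [score_eq_sum_castSucc_add hlast, Finset.sum_filter]
    simp [pluralityVote_of_le_three (hleft _)]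
  have h₂ : score ![(1 : ℝ), 2, 4] 1 w T 2 = w (Fin.last n) := by
    rw [score_eq_sum_castSucc_add hlast]
    simp [pluralityVote_of_le_three (hleft _), apply_ite (· = (2 : Fin 3))]
  have hsplit := Finset.sum_filter_add_sum_filter_not Finset.univ
    (fun j : Fin n => T j.castSucc ≤ 3 / 2) (fun j => w j.castSucc)
  constructor
  · intro h
    linarith [h 0, h 1]
  · intro h i
    fin_cases i <;> simp only [Fin.zero_eta, Fin.mk_one, Fin.reduceFinMk] <;> linarith

lemma forall_mem_Icc_ite_iff (l u l' u' : ℝ) :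
    (∀ j : Fin (n + 1), T j ∈ Set.Icc (if (j : ℕ) < n then l else l')
        (if (j : ℕ) < n then u else u')) ↔
      (∀ j : Fin n, T j.castSucc ∈ Set.Icc l u) ∧ T (Fin.last n) ∈ Set.Icc l' u' := by
  simp only [Fin.forall_fin_succ', Fin.val_castSucc, Fin.is_lt, Fin.val_last, lt_irrefl,
    if_true, if_false]

end Reduction

theorem plurality_partition_reduction_general (n A : ℕ) (a : Fin n → ℕ)
    (hsum : ∑ i, a i = 2 * A) :
    (∃ T : Fin (n + 1) → ℝ,
        (∀ j : Fin (n + 1), T j ∈ Set.Icc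
          (if (j : ℕ) < n then (1 : ℝ) else 4)
          (if (j : ℕ) < n then (2 : ℝ) else 5)) ∧
        ∀ i : Fin 3,
          score ![(1 : ℝ), 2, 4] 1
              (fun j => if h : (j : ℕ) < n then (a ⟨j, h⟩ : ℝ) else (A : ℝ)) T i ≤
            score ![(1 : ℝ), 2, 4] 1
              (fun j => if h : (j : ℕ) < n then (a ⟨j, h⟩ : ℝ) else (A : ℝ)) T 2) ↔
      ∃ S : Finset (Fin n), ∑ i ∈ S, a i = A := by
  set w : Fin (n + 1) → ℝ := fun j => if h : (j : ℕ) < n then (a ⟨j, h⟩ : ℝ) else (A : ℝ)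
  have hw : ∀ j : Fin n, w j.castSucc = a j := fun j => dif_pos j.is_lt
  have hw_last : w (Fin.last n) = A := dif_neg (lt_irrefl n)
  have hwsum : ∑ j : Fin n, w j.castSucc = 2 * w (Fin.last n) := by
    simp only [hw, hw_last]
    exact_mod_cast hsum
  constructor
  · rintro ⟨T, hfeas, hwin⟩
    obtain ⟨hleft, hlast⟩ := (forall_mem_Icc_ite_iff _ _ _ _).mp hfeas
    have hS := (forall_score_le_iff (fun j => by linarith [(hleft j).2]) (by linarith [hlast.1])
      hwsum).mp hwin
    simp only [hw, hw_last] at hS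
    exact ⟨_, by exact_mod_cast hS⟩
  · rintro ⟨S, hS⟩
    set T : Fin (n + 1) → ℝ := Fin.snoc (fun j => if j ∈ S then 1 else 2) 4
    have hT : ∀ j, T j.castSucc = if j ∈ S then 1 else 2 := fun j => Fin.snoc_castSucc ..
    have hT_last : T (Fin.last n) = 4 := Fin.snoc_last ..
    have hleft : ∀ j : Fin n, T j.castSucc ∈ Set.Icc 1 2 := fun j => by
      by_cases hj : j ∈ S <;> norm_num [hT, hj]
    have hfilter : Finset.univ.filter (fun j : Fin n => T j.castSucc ≤ 3 / 2) = S := by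
      ext j
      by_cases hj : j ∈ S <;> norm_num [hT, hj]
    refine ⟨T, (forall_mem_Icc_ite_iff _ _ _ _).mpr ⟨hleft, by norm_num [hT_last]⟩,
      (forall_score_le_iff (fun j => (hleft j).2.trans (by norm_num)) (by norm_num [hT_last])
        hwsum).mpr ?_⟩
    simp only [hfilter, hw, hw_last]
    exact_mod_cast hS

/-- Correctness of the PARTITION reduction for weighted plurality (1-approval) in one
dimension: with candidates at `1, 2, 4`, voters `1, …, n` with intervals `[1, 2]` and
weights `a i`, and one voter with interval `[4, 5]` and weight `A`, the candidate at
position `4` is a possible winner iff some subset of the `a i` sums to `A`. -/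
theorem plurality_partition_reduction (n A : ℕ) (a : Fin n → ℕ)
    (hpos : ∀ i, 0 < a i) (hsum : ∑ i, a i = 2 * A) :
    (∃ T : Fin (n + 1) → ℝ,
        (∀ j : Fin (n + 1), T j ∈ Set.Icc
          (if (j : ℕ) < n then (1 : ℝ) else 4)
          (if (j : ℕ) < n then (2 : ℝ) else 5)) ∧
        ∀ i : Fin 3,
          score ![(1 : ℝ), 2, 4] 1
              (fun j => if h : (j : ℕ) < n then (a ⟨j, h⟩ : ℝ) else (A : ℝ)) T i ≤
            score ![(1 : ℝ), 2, 4] 1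
              (fun j => if h : (j : ℕ) < n then (a ⟨j, h⟩ : ℝ) else (A : ℝ)) T 2) ↔
      ∃ S : Finset (Fin n), ∑ i ∈ S, a i = A :=
  plurality_partition_reduction_general n A a hsum
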